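/- Let A be a totally unimodular matrix representing a co-Eulerian regular oriented matroid, and let B_1, B_2 be bases. The simplices Δ_{B_1} = conv{a_i : i ∈ B_1} and Δ_{B_2} = conv{a_i : i ∈ B_2} intersect in a common face if and only if there is no signed circuit C = C^+ ⊔ C^- with C^+ ⊆ B_1 and C^- ⊆ B_2. -/

import Mathlib

open Finset

def Matrix.ColDep {m n : Type*} (A : Matrix m n ℝ) (S : Finset n) : Prop :=
  ¬ LinearIndependent ℝ (fun i : S => A.transpose i.1)

def Matrix.IsCircuit {m n : Type*} (A : Matrix m n ℝ) (C : Finset n) : Prop :=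
  A.ColDep C ∧ ∀ S ⊂ C, ¬ A.ColDep S

/-- A signed circuit: a circuit `C⁺ ⊔ C⁻` with `∑_{i∈C⁺} a_i - ∑_{i∈C⁻} a_i = 0`. -/
def Matrix.IsSignedCircuit {m n : Type*} [Fintype m] [DecidableEq n]
    (A : Matrix m n ℝ) (Cp Cm : Finset n) : Prop :=
  Disjoint Cp Cm ∧ A.IsCircuit (Cp ∪ Cm) ∧
    (∑ i ∈ Cp, A.transpose i) - (∑ i ∈ Cm, A.transpose i) = 0

/-!
If a signed circuit has `C⁺ ⊆ B₁` and `C⁻ ⊆ B₂`, the co-Eulerian condition `|C⁺| = |C⁻|` makes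
the barycentre of `C⁺` equal to the barycentre of `C⁻`, so it lies in both simplices. Barycentric
coordinates on the independent sets `B₁` and `B₂` are unique, so a face spanned by common vertices
`S` can only contain this point if `C⁺ ∪ C⁻ ⊆ S ⊆ B₁`, which contradicts independence of `B₁`.

Conversely, a point of `Δ_{B₁} ∩ Δ_{B₂}` with barycentric coordinates `a` on `B₁` and `b` on `B₂`
gives the linear dependency `a - b`. By Cramer's rule, total unimodularity makes the dependency of
every circuit a `±1` vector, and subtracting such vectors shows that every nonzero dependency
contains a conformal signed circuit: its positive part lies in `B₁` and its negative part in `B₂`.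
If there is no such circuit, then `a = b` and the point lies in the face spanned by `B₁ ∩ B₂`.
-/

section ConvexHull

variable {ι R E : Type*} [Field R] [LinearOrder R] [IsStrictOrderedRing R] [AddCommGroup E]
  [Module R E]

theorem Finset.sum_smul_mem_convexHull_image {s : Finset ι} {f : ι → E} {w : ι → R}
    (hw₀ : ∀ i ∈ s, 0 ≤ w i) (hw₁ : ∑ i ∈ s, w i = 1) :
    ∑ i ∈ s, w i • f i ∈ convexHull R (f '' s) := by
  rw [← centerMass_eq_of_sum_1 _ _ hw₁]
  exact s.centerMass_mem_convexHull hw₀ (hw₁ ▸ one_pos) fun i hi => Set.mem_image_of_mem f hi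

theorem Finset.exists_sum_smul_eq_of_mem_convexHull_image {s : Finset ι} {f : ι → E}
    (hf : Set.InjOn f s) {x : E} (hx : x ∈ convexHull R (f '' s)) :
    ∃ w : ι → R, (∀ i, 0 ≤ w i) ∧ (∀ i ∉ s, w i = 0) ∧ ∑ i ∈ s, w i = 1 ∧
      ∑ i ∈ s, w i • f i = x := by
  classical
  rw [← coe_image, mem_convexHull'] at hx
  obtain ⟨w, hw₀, hw₁, hwx⟩ := hx
  rw [sum_image hf] at hw₁ hwx
  refine ⟨fun i => if i ∈ s then w (f i) else 0, fun i => ?_, fun i hi => if_neg hi, ?_, ?_⟩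
  · dsimp only
    split_ifs with hi
    exacts [hw₀ _ (mem_image_of_mem f hi), le_rfl]
  · simpa only [sum_ite_mem, inter_self] using hw₁
  · simpa only [ite_smul, zero_smul, sum_ite_mem, inter_self] using hwx

theorem LinearIndepOn.subset_of_sum_smul_mem_convexHull [DecidableEq ι] {f : ι → E} {B : Set ι}
    (hB : LinearIndepOn R f B) {S T : Finset ι} (hS : ↑S ⊆ B) (hT : ↑T ⊆ B) {c : ι → R}
    (hc : ∀ i ∈ T, c i ≠ 0) (hx : ∑ i ∈ T, c i • f i ∈ convexHull R (f '' S)) : T ⊆ S := by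
  obtain ⟨w, -, hwS, -, hw⟩ := exists_sum_smul_eq_of_mem_convexHull_image (hB.injOn.mono hS) hx
  intro i hiT
  by_contra hiS
  have hsum : ∑ j ∈ S ∪ T, (w j - if j ∈ T then c j else 0) • f j = 0 := by
    simp only [sub_smul, sum_sub_distrib, ite_smul, zero_smul, sum_ite_mem,
      union_inter_cancel_right]
    rw [← sum_subset subset_union_left fun j _ hj => by rw [hwS j hj, zero_smul], hw, sub_self]
  have := linearIndepOn_iff'.mp hB (S ∪ T) _ (by simp [hS, hT]) hsum i (mem_union_right _ hiT)
  simp [hwS i hiS, hiT, hc i hiT] at this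

end ConvexHull

theorem exists_conformal_sub_mul {ι R : Type*} [Field R] [LinearOrder R] [IsStrictOrderedRing R]
    {C : Finset ι} {v w : ι → R} (hv : ∀ i ∈ C, v i ≠ 0) (hw : ∀ i ∉ C, w i = 0)
    {j : ι} (hj : j ∈ C) (hvw : 0 < v j * w j) :
    ∃ t > 0, ∃ i ∈ C, v i = t * w i ∧ ∀ i, v i - t * w i ≠ 0 → 0 < (v i - t * w i) * v i := by
  classical
  -- `t` is the least ratio `v i / w i` over the indices where `v` and `w` have the same sign.
  obtain ⟨i₁, hi₁P, hmin⟩ := (C.filter fun i => 0 < v i * w i).exists_min_image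
    (fun i => v i / w i) ⟨j, mem_filter.mpr ⟨hj, hvw⟩⟩
  obtain ⟨hi₁C, hi₁⟩ := mem_filter.mp hi₁P
  have hw₁ : w i₁ ≠ 0 := by rintro h; simp [h] at hi₁
  have ht : 0 < v i₁ / w i₁ := by
    refine pos_of_mul_pos_left (b := w i₁ * w i₁) ?_ (mul_self_nonneg _)
    rwa [div_mul_eq_mul_div, mul_div_assoc, mul_div_cancel_right₀ _ hw₁]
  refine ⟨v i₁ / w i₁, ht, i₁, hi₁C, by field_simp, fun i hi => ?_⟩
  by_cases hiP : 0 < v i * w i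
  · have hwi : w i ≠ 0 := by rintro h; simp [h] at hiP
    have hiC : i ∈ C := by_contra fun h => hwi (hw i h)
    have hle := hmin i (mem_filter.mpr ⟨hiC, hiP⟩)
    have hlt : v i₁ / w i₁ < v i / w i :=
      hle.lt_of_ne fun h => hi (by rw [h, div_mul_cancel₀ _ hwi, sub_self])
    have hid : (v i - v i₁ / w i₁ * w i) * v i = (v i / w i - v i₁ / w i₁) * (v i * w i) := by
      field_simp
    rw [hid]
    exact mul_pos (sub_pos.mpr hlt) hiP
  · have hvi : v i ≠ 0 := by
      intro h
      by_cases hiC : i ∈ C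
      · exact hv i hiC h
      · exact hi (by simp [h, hw i hiC])
    nlinarith [sq_pos_of_ne_zero hvi, mul_nonneg ht.le (neg_nonneg.mpr (not_lt.mp hiP))]

namespace Matrix

theorem cramer_mulVec {R m : Type*} [CommRing R] [Fintype m] [DecidableEq m]
    (M : Matrix m m R) (x : m → R) : M.cramer (M *ᵥ x) = M.det • x := by
  rw [cramer_eq_adjugate_mulVec, mulVec_mulVec, adjugate_mul, smul_mulVec, one_mulVec]

theorem exists_submatrix_det_ne_zero {K m D : Type*} [Field K] [Fintype m] [Fintype D]
    [DecidableEq D] (M : Matrix m D K) (hM : LinearIndependent K Mᵀ) :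
    ∃ r : D → m, (M.submatrix r id).det ≠ 0 := by
  have hspan : ⊤ ≤ Submodule.span K (Set.range M.row) := by
    rw [top_le_iff]
    apply Submodule.eq_top_of_finrank_eq
    rw [← rank_eq_finrank_span_row, ← rank_transpose, LinearIndependent.rank_matrix (M := Mᵀ) hM,
      Module.finrank_fintype_fun_eq_card]
  set b := Module.Basis.ofSpan hspan
  set e := (Pi.basisFun K D).indexEquiv b
  choose r hr using fun d => Module.Basis.ofSpan_subset hspan ⟨e d, rfl⟩
  refine ⟨r, ((isUnit_iff_isUnit_det _).mp
    (linearIndependent_rows_iff_isUnit.mp ?_)).ne_zero⟩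
  have hrows : M.submatrix r id = b ∘ e := funext hr
  rw [hrows]
  exact b.linearIndependent.comp e e.injective

variable {k n : Type*} {A : Matrix k n ℝ}

theorem colDep_iff {S : Finset n} : A.ColDep S ↔ ¬ LinearIndepOn ℝ A.col (S : Set n) := Iff.rfl

theorem colDep_of_sum_smul_eq_zero {T : Finset n} {u : n → ℝ}
    (hu : ∑ i ∈ T, u i • A.col i = 0) (hne : ∃ i ∈ T, u i ≠ 0) : A.ColDep T := by
  obtain ⟨i, hiT, hi⟩ := hne
  exact fun hT => hi (linearIndepOn_iff'.mp hT T u subset_rfl hu i hiT)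

theorem ColDep.exists_sum_smul_eq_zero {T : Finset n} (hT : A.ColDep T) :
    ∃ u : n → ℝ, (∃ i ∈ T, u i ≠ 0) ∧ ∑ i ∈ T, u i • A.col i = 0 := by
  classical
  rw [colDep_iff, linearIndepOn_iff'] at hT
  push Not at hT
  obtain ⟨t, u, htT, hu, i, hit, hi⟩ := hT
  refine ⟨fun j => if j ∈ t then u j else 0, ⟨i, htT hit, by simpa [hit]⟩, ?_⟩
  simp only [ite_smul, zero_smul, sum_ite_mem, inter_eq_right.mpr (coe_subset.mp htT)]
  exact hu

theorem ColDep.exists_isCircuit_subset {T : Finset n} (hT : A.ColDep T) :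
    ∃ C ⊆ T, A.IsCircuit C := by
  classical
  obtain ⟨C, hC⟩ := (T.powerset.filter A.ColDep).exists_minimal ⟨T, by simpa using hT⟩
  simp only [mem_filter, mem_powerset] at hC
  exact ⟨C, hC.1.1, hC.1.2, fun S hSC hS =>
    hSC.2 (hC.2 ⟨hSC.1.trans hC.1.1, hS⟩ hSC.1)⟩

theorem IsCircuit.nonempty {C : Finset n} (hC : A.IsCircuit C) : C.Nonempty := by
  rw [nonempty_iff_ne_empty]
  rintro rfl
  exact hC.1 (by simp)

theorem IsTotallyUnimodular.eq_zero_or_eq_or_eq_neg_of_mulVec_eq (hA : A.IsTotallyUnimodular)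
    {D : Type*} [Fintype D] [DecidableEq D] {r : D → k} {g : D → n}
    (hdet : (A.submatrix r g).det ≠ 0) {x : D → ℝ} {s : ℝ} {i₀ : n}
    (hx : A.submatrix r g *ᵥ x = s • fun d => A (r d) i₀) (d : D) :
    x d = 0 ∨ x d = s ∨ x d = -s := by
  -- By Cramer's rule `x d` is `s` times a ratio of two minors of `A`, each in `{0, 1, -1}`.
  have hcramer := congrFun (congrArg (A.submatrix r g).cramer hx) d
  rw [cramer_mulVec, map_smul, Pi.smul_apply, Pi.smul_apply, cramer_apply] at hcramer
  have hupd : (A.submatrix r g).updateCol d (fun e => A (r e) i₀) =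
      A.submatrix r (Function.update g d i₀) := by
    ext e d'
    rcases eq_or_ne d' d with rfl | hd <;> simp [*]
  obtain ⟨σ, hσ⟩ := (isTotallyUnimodular_iff_fintype A).mp hA D r g
  obtain ⟨τ, hτ⟩ := (isTotallyUnimodular_iff_fintype A).mp hA D r (Function.update g d i₀)
  rw [hupd, ← hτ, ← hσ] at hcramer
  rw [← hσ] at hdet
  cases σ <;> cases τ <;> simp at hcramer hdet <;> grind

section

variable [DecidableEq n]

theorem IsCircuit.linearIndepOn_erase {C : Finset n} (hC : A.IsCircuit C) {j : n} (hj : j ∈ C) :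
    LinearIndepOn ℝ A.col (C.erase j : Set n) :=
  not_not.mp (hC.2 _ (erase_ssubset hj))

theorem IsCircuit.eq_zero_of_sum_smul_eq_zero {C : Finset n}
    (hC : A.IsCircuit C) {u : n → ℝ} (hu : ∑ i ∈ C, u i • A.col i = 0) {j : n} (hj : j ∈ C)
    (huj : u j = 0) {i : n} (hi : i ∈ C) : u i = 0 := by
  rcases eq_or_ne i j with rfl | hij
  · exact huj
  refine linearIndepOn_iff'.mp (hC.linearIndepOn_erase hj) _ u subset_rfl ?_ i
    (mem_erase.mpr ⟨hij, hi⟩)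
  rwa [sum_erase _ (by rw [huj, zero_smul])]

end

variable [Fintype k] [DecidableEq n]

theorem IsTotallyUnimodular.eq_or_eq_neg_of_isCircuit (hA : A.IsTotallyUnimodular)
    {C : Finset n} (hC : A.IsCircuit C) {u : n → ℝ} (hu : ∑ i ∈ C, u i • A.col i = 0)
    {i₀ j : n} (hi₀ : i₀ ∈ C) (hj : j ∈ C) : u j = u i₀ ∨ u j = -u i₀ := by
  rcases eq_or_ne j i₀ with rfl | hji
  · exact Or.inl rfl
  set D := C.erase i₀
  obtain ⟨r, hr⟩ := exists_submatrix_det_ne_zero (A.submatrix id ((↑) : D → n))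
    (hC.linearIndepOn_erase hi₀)
  rw [submatrix_submatrix, Function.id_comp, Function.comp_id] at hr
  have hrows : A.submatrix r ((↑) : D → n) *ᵥ (fun d : D => u d) =
      -u i₀ • fun d => A (r d) i₀ := by
    funext d
    have hrow := congrFun hu (r d)
    rw [Finset.sum_apply, ← add_sum_erase C _ hi₀, ← sum_coe_sort D] at hrow
    simp only [Pi.smul_apply, Pi.zero_apply, col_apply, smul_eq_mul] at hrow
    simp only [mulVec, dotProduct, submatrix_apply, Pi.smul_apply, smul_eq_mul]
    linarith [show ∑ x : D, A (r d) x * u x = ∑ x : D, u x * A (r d) x from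
      sum_congr rfl fun _ _ => mul_comm _ _]
  rcases hA.eq_zero_or_eq_or_eq_neg_of_mulVec_eq hr hrows ⟨j, mem_erase.mpr ⟨hji, hj⟩⟩
    with h | h | h
  · exact Or.inl (h.trans (hC.eq_zero_of_sum_smul_eq_zero hu hj h hi₀).symm)
  · exact Or.inr h
  · exact Or.inl (by simpa using h)

theorem IsTotallyUnimodular.exists_sign_vector_of_isCircuit (hA : A.IsTotallyUnimodular)
    {C : Finset n} (hC : A.IsCircuit C) {j : n} (hj : j ∈ C) {s : ℝ} (hs : s ≠ 0) :
    ∃ w : n → ℝ, (∀ i ∉ C, w i = 0) ∧ (∀ i ∈ C, w i = 1 ∨ w i = -1) ∧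
      ∑ i ∈ C, w i • A.col i = 0 ∧ 0 < s * w j := by
  obtain ⟨u, ⟨i₀, hi₀, hu₀⟩, hu⟩ := hC.1.exists_sum_smul_eq_zero
  have huj : u j ≠ 0 := fun h => hu₀ (hC.eq_zero_of_sum_smul_eq_zero hu hj h hi₀)
  obtain ⟨ε, hε, hεs⟩ : ∃ ε : ℝ, (ε = 1 ∨ ε = -1) ∧ 0 < s * ε := by
    rcases hs.lt_or_gt with hneg | hpos
    · exact ⟨-1, Or.inr rfl, by linarith⟩
    · exact ⟨1, Or.inl rfl, by linarith⟩
  refine ⟨fun i => if i ∈ C then ε * (u i / u j) else 0, fun i hi => if_neg hi,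
    fun i hi => ?_, ?_, by simpa [hj, huj] using hεs⟩
  · rcases hA.eq_or_eq_neg_of_isCircuit hC hu hj hi with h | h <;>
      rcases hε with rfl | rfl <;> simp [hi, h, huj]
  · calc ∑ i ∈ C, (if i ∈ C then ε * (u i / u j) else 0) • A.col i
        = ∑ i ∈ C, (ε / u j) • (u i • A.col i) :=
          sum_congr rfl fun i hi => by rw [if_pos hi, ← smul_assoc, smul_eq_mul]; ring_nf
      _ = 0 := by rw [← smul_sum, hu, smul_zero]

theorem IsCircuit.isSignedCircuit_of_sign_vector {C : Finset n} (hC : A.IsCircuit C)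
    {w : n → ℝ} (hw : ∀ i ∈ C, w i = 1 ∨ w i = -1) (hsum : ∑ i ∈ C, w i • A.col i = 0) :
    A.IsSignedCircuit (C.filter (0 < w ·)) (C.filter (w · < 0)) := by
  have hdisj : Disjoint (C.filter (0 < w ·)) (C.filter (w · < 0)) :=
    disjoint_filter.mpr fun _ _ h₁ h₂ => lt_asymm h₁ h₂
  have hunion : C.filter (0 < w ·) ∪ C.filter (w · < 0) = C := by
    rw [← filter_or, filter_true_of_mem]
    intro i hi
    rcases hw i hi with h | h <;> simp [h]
  refine ⟨hdisj, by rwa [hunion], ?_⟩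
  rw [← hunion, sum_union hdisj] at hsum
  have hpos : ∀ i ∈ C.filter (0 < w ·), w i = 1 := fun i hi => by
    rcases hw i (mem_filter.mp hi).1 with h | h
    · exact h
    · linarith [(mem_filter.mp hi).2]
  have hneg : ∀ i ∈ C.filter (w · < 0), w i = -1 := fun i hi => by
    rcases hw i (mem_filter.mp hi).1 with h | h
    · linarith [(mem_filter.mp hi).2]
    · exact h
  have hsum_pos : ∑ i ∈ C.filter (0 < w ·), w i • A.col i = ∑ i ∈ C.filter (0 < w ·), A.col i :=
    sum_congr rfl fun i hi => by rw [hpos i hi, one_smul]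
  have hsum_neg : ∑ i ∈ C.filter (w · < 0), w i • A.col i = -∑ i ∈ C.filter (w · < 0), A.col i :=
    (sum_congr rfl fun i hi => by rw [hneg i hi, neg_one_smul]).trans (sum_neg_distrib _)
  rwa [hsum_pos, hsum_neg, ← sub_eq_add_neg] at hsum

theorem IsTotallyUnimodular.exists_isSignedCircuit_conformal (hA : A.IsTotallyUnimodular)
    (T : Finset n) {v : n → ℝ} (hvT : ∀ i ∉ T, v i = 0) (hv : ∑ i ∈ T, v i • A.col i = 0)
    (hne : ∃ i, v i ≠ 0) :
    ∃ Cp Cm, A.IsSignedCircuit Cp Cm ∧ (∀ i ∈ Cp, 0 < v i) ∧ ∀ i ∈ Cm, v i < 0 := by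
  induction T using Finset.strongInduction generalizing v with
  | H T ih =>
  set S := T.filter (v · ≠ 0)
  have hS : ∑ i ∈ S, v i • A.col i = 0 :=
    (sum_filter_of_ne fun _ _ h => left_ne_zero_of_smul h).trans hv
  obtain ⟨j₀, hj₀⟩ := hne
  obtain ⟨C, hCS, hC⟩ := (colDep_of_sum_smul_eq_zero hS
    ⟨j₀, mem_filter.mpr ⟨by_contra fun h => hj₀ (hvT j₀ h), hj₀⟩, hj₀⟩).exists_isCircuit_subset
  have hvC : ∀ i ∈ C, v i ≠ 0 := fun i hi => (mem_filter.mp (hCS hi)).2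
  obtain ⟨j, hj⟩ := hC.nonempty
  obtain ⟨w, hw0, hw, hwsum, hvw⟩ := hA.exists_sign_vector_of_isCircuit hC hj (hvC j hj)
  obtain ⟨t, ht, i₁, hi₁, hvi₁, hconf⟩ := exists_conformal_sub_mul hvC hw0 hj hvw
  by_cases hvt : ∀ i, v i = t * w i
  · refine ⟨_, _, hC.isSignedCircuit_of_sign_vector hw hwsum, fun i hi => ?_, fun i hi => ?_⟩
    · rw [hvt]
      exact mul_pos ht (mem_filter.mp hi).2
    · rw [hvt]
      exact mul_neg_of_pos_of_neg ht (mem_filter.mp hi).2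
  push Not at hvt
  obtain ⟨i, hi⟩ := hvt
  have hCT : C ⊆ T := hCS.trans (filter_subset _ _)
  have hzero : ∀ i ∉ T.erase i₁, v i - t * w i = 0 := by
    intro i hi
    rcases eq_or_ne i i₁ with rfl | hii₁
    · rw [← hvi₁, sub_self]
    have hiT : i ∉ T := fun h => hi (mem_erase.mpr ⟨hii₁, h⟩)
    rw [hvT i hiT, hw0 i fun h => hiT (hCT h), mul_zero, sub_zero]
  have hsum : ∑ i ∈ T.erase i₁, (v i - t * w i) • A.col i = 0 :=
    calc ∑ i ∈ T.erase i₁, (v i - t * w i) • A.col i = ∑ i ∈ T, (v i - t * w i) • A.col i :=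
          sum_erase _ (by rw [← hvi₁, sub_self, zero_smul])
      _ = ∑ i ∈ T, v i • A.col i - t • ∑ i ∈ C, w i • A.col i := by
          rw [sum_subset hCT fun i _ hi => by rw [hw0 i hi, zero_smul], smul_sum,
            ← sum_sub_distrib]
          exact sum_congr rfl fun i _ => by rw [sub_smul, mul_smul]
      _ = 0 := by rw [hv, hwsum, smul_zero, sub_zero]
  obtain ⟨Cp, Cm, hsc, hp, hm⟩ := ih _ (erase_ssubset (hCT hi₁)) hzero hsum ⟨i, sub_ne_zero.mpr hi⟩
  exact ⟨Cp, Cm, hsc, fun i hi => pos_of_mul_pos_right (hconf i (hp i hi).ne') (hp i hi).le,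
    fun i hi => neg_of_mul_pos_right (hconf i (hm i hi).ne) (hm i hi).le⟩

theorem IsSignedCircuit.sum_col_eq {Cp Cm : Finset n} (hsc : A.IsSignedCircuit Cp Cm) :
    ∑ i ∈ Cp, A.col i = ∑ i ∈ Cm, A.col i :=
  sub_eq_zero.mp hsc.2.2

theorem IsSignedCircuit.convexHull_inter_ne {Cp Cm B₁ B₂ S : Finset n}
    (hsc : A.IsSignedCircuit Cp Cm) (hcard : #Cp = #Cm)
    (hB₁ : LinearIndepOn ℝ A.col (B₁ : Set n)) (hB₂ : LinearIndepOn ℝ A.col (B₂ : Set n))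
    (hCp : Cp ⊆ B₁) (hCm : Cm ⊆ B₂) (hS₁ : S ⊆ B₁) (hS₂ : S ⊆ B₂) :
    convexHull ℝ (A.col '' B₁) ∩ convexHull ℝ (A.col '' B₂) ≠ convexHull ℝ (A.col '' S) := by
  intro hS
  have hCp_ne : Cp.Nonempty := by
    obtain ⟨i, hi⟩ := hsc.2.1.nonempty
    rcases mem_union.mp hi with hi | hi
    · exact ⟨i, hi⟩
    · exact card_pos.mp (hcard ▸ card_pos.mpr ⟨i, hi⟩)
  set c : ℝ := (#Cp : ℝ)⁻¹
  have hc : 0 < c := inv_pos.mpr (Nat.cast_pos.mpr hCp_ne.card_pos)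
  have hCp_sum : ∑ _i ∈ Cp, c = 1 := by
    rw [sum_const, nsmul_eq_mul, mul_inv_cancel₀ (Nat.cast_ne_zero.mpr hCp_ne.card_pos.ne')]
  have hCm_sum : ∑ _i ∈ Cm, c = 1 := by rwa [sum_const, ← hcard, ← sum_const]
  have hcentroid : ∑ i ∈ Cp, c • A.col i = ∑ i ∈ Cm, c • A.col i := by
    rw [← smul_sum, ← smul_sum, hsc.sum_col_eq]
  have hx : ∑ i ∈ Cp, c • A.col i ∈ convexHull ℝ (A.col '' S) := by
    rw [← hS]
    refine ⟨convexHull_mono (Set.image_mono (coe_subset.mpr hCp))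
      (sum_smul_mem_convexHull_image (fun _ _ => hc.le) hCp_sum), ?_⟩
    rw [hcentroid]
    exact convexHull_mono (Set.image_mono (coe_subset.mpr hCm))
      (sum_smul_mem_convexHull_image (fun _ _ => hc.le) hCm_sum)
  have hCpS := hB₁.subset_of_sum_smul_mem_convexHull (coe_subset.mpr hS₁) (coe_subset.mpr hCp)
    (fun _ _ => hc.ne') hx
  have hCmS := hB₂.subset_of_sum_smul_mem_convexHull (coe_subset.mpr hS₂) (coe_subset.mpr hCm)
    (fun _ _ => hc.ne') (hcentroid ▸ hx)
  exact hsc.2.1.1 (hB₁.mono (coe_subset.mpr (union_subset (hCpS.trans hS₁) (hCmS.trans hS₁))))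

theorem IsTotallyUnimodular.convexHull_inter_subset (hA : A.IsTotallyUnimodular)
    {B₁ B₂ : Finset n} (hB₁ : LinearIndepOn ℝ A.col (B₁ : Set n))
    (hB₂ : LinearIndepOn ℝ A.col (B₂ : Set n))
    (h : ¬ ∃ Cp Cm : Finset n, A.IsSignedCircuit Cp Cm ∧ Cp ⊆ B₁ ∧ Cm ⊆ B₂) :
    convexHull ℝ (A.col '' B₁) ∩ convexHull ℝ (A.col '' B₂) ⊆
      convexHull ℝ (A.col '' ↑(B₁ ∩ B₂)) := by
  rintro x ⟨hx₁, hx₂⟩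
  obtain ⟨a, ha₀, haB, ha₁, hax⟩ := exists_sum_smul_eq_of_mem_convexHull_image hB₁.injOn hx₁
  obtain ⟨b, hb₀, hbB, -, hbx⟩ := exists_sum_smul_eq_of_mem_convexHull_image hB₂.injOn hx₂
  have hab : a = b := by
    by_contra hne
    have hsum : ∑ i ∈ B₁ ∪ B₂, (a i - b i) • A.col i = 0 := by
      simp only [sub_smul, sum_sub_distrib]
      rw [← sum_subset subset_union_left fun i _ hi => by rw [haB i hi, zero_smul],
        ← sum_subset subset_union_right fun i _ hi => by rw [hbB i hi, zero_smul], hax, hbx,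
        sub_self]
    obtain ⟨Cp, Cm, hsc, hp, hm⟩ := hA.exists_isSignedCircuit_conformal (B₁ ∪ B₂)
      (fun i hi => by simp [haB i (by simp_all), hbB i (by simp_all)]) hsum
      (Function.ne_iff.mp (sub_ne_zero.mpr hne))
    refine h ⟨Cp, Cm, hsc, fun i hi => by_contra fun hiB => ?_, fun i hi => by_contra fun hiB => ?_⟩
    · linarith [hp i hi, haB i hiB, hb₀ i]
    · linarith [hm i hi, hbB i hiB, ha₀ i]
  subst hab
  have hzero : ∀ i ∉ B₁ ∩ B₂, a i = 0 := fun i hi => by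
    rcases not_and_or.mp (mem_inter.not.mp hi) with hi | hi
    exacts [haB i hi, hbB i hi]
  rw [← hax, ← sum_subset inter_subset_left fun i _ hi => by rw [hzero i hi, zero_smul]]
  exact sum_smul_mem_convexHull_image (fun i _ => ha₀ i)
    (by rwa [sum_subset inter_subset_left fun i _ hi => hzero i hi])

end Matrix

theorem simplices_meet_in_common_face_iff_general
    {k n : Type*} [Fintype k] [DecidableEq n]
    (A : Matrix k n ℝ) (hA : A.IsTotallyUnimodular)
    (hco : ∀ Cp Cm : Finset n, A.IsSignedCircuit Cp Cm → Cp.card = Cm.card)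
    (B₁ B₂ : Finset n)
    (hB₁ : LinearIndependent ℝ (fun i : B₁ => A.transpose i.1))
    (hB₂ : LinearIndependent ℝ (fun i : B₂ => A.transpose i.1)) :
    (∃ S : Finset n, S ⊆ B₁ ∧ S ⊆ B₂ ∧
        convexHull ℝ (A.transpose '' B₁) ∩ convexHull ℝ (A.transpose '' B₂) =
          convexHull ℝ (A.transpose '' S)) ↔
      ¬ ∃ Cp Cm : Finset n, A.IsSignedCircuit Cp Cm ∧ Cp ⊆ B₁ ∧ Cm ⊆ B₂ := by
  constructor
  · rintro ⟨S, hS₁, hS₂, hS⟩ ⟨Cp, Cm, hsc, hCp, hCm⟩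
    exact hsc.convexHull_inter_ne (hco Cp Cm hsc) hB₁ hB₂ hCp hCm hS₁ hS₂ hS
  · intro h
    refine ⟨B₁ ∩ B₂, inter_subset_left, inter_subset_right,
      (hA.convexHull_inter_subset hB₁ hB₂ h).antisymm ?_⟩
    exact Set.subset_inter (convexHull_mono (Set.image_mono (coe_subset.mpr inter_subset_left)))
      (convexHull_mono (Set.image_mono (coe_subset.mpr inter_subset_right)))

/-- For a totally unimodular matrix `A` representing a co-Eulerian regular
oriented matroid and bases `B₁, B₂`, the simplices `Δ_{B₁} = conv{a_i : i ∈ B₁}` and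
`Δ_{B₂} = conv{a_i : i ∈ B₂}` intersect in a common face (their intersection is the convex
hull of the columns of a common vertex subset) if and only if there is no signed circuit
`C = C⁺ ⊔ C⁻` with `C⁺ ⊆ B₁` and `C⁻ ⊆ B₂`. -/
theorem simplices_meet_in_common_face_iff
    {k n : Type*} [Fintype k] [Fintype n] [DecidableEq n]
    (A : Matrix k n ℝ) (hA : A.IsTotallyUnimodular)
    (hco : ∀ Cp Cm : Finset n, A.IsSignedCircuit Cp Cm → Cp.card = Cm.card)
    (B₁ B₂ : Finset n)
    (hB₁ : LinearIndependent ℝ (fun i : B₁ => A.transpose i.1)) (hB₁c : B₁.card = A.rank)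
    (hB₂ : LinearIndependent ℝ (fun i : B₂ => A.transpose i.1)) (hB₂c : B₂.card = A.rank) :
    (∃ S : Finset n, S ⊆ B₁ ∧ S ⊆ B₂ ∧
        convexHull ℝ (A.transpose '' B₁) ∩ convexHull ℝ (A.transpose '' B₂) =
          convexHull ℝ (A.transpose '' S)) ↔
      ¬ ∃ Cp Cm : Finset n, A.IsSignedCircuit Cp Cm ∧ Cp ⊆ B₁ ∧ Cm ⊆ B₂ :=
  simplices_meet_in_common_face_iff_general A hA hco B₁ B₂ hB₁ hB₂
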